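/- With notation as in Lemma 2.1 and R² the constant curvature +1 tensor, the Jacobi operator satisfies J(T_1) = 0 while J(U_1 - V_1) ≠ 0; since g(T_1,T_1) = g(U_1-V_1, U_1-V_1) = -1, both are unit timelike vectors but their Jacobi operators have different Jordan normal forms. Hence R is not timelike Jordan Osserman. -/

import Mathlib

open scoped BigOperators

/-- Basis of `ℝ^{3s}`: `(0, a) = U_a`, `(1, a) = V_a`, `(2, a) = T_a`. -/
abbrev BasisIdx (s : ℕ) := Fin 3 × Fin s

/-- The basis vectors `U_a`, `V_a`, `T_a` of `ℝ^{3s}`. -/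
def Uvec {s : ℕ} (a : Fin s) : BasisIdx s → ℝ := Pi.single ((0 : Fin 3), a) 1
def Vvec {s : ℕ} (a : Fin s) : BasisIdx s → ℝ := Pi.single ((1 : Fin 3), a) 1
def Tvec {s : ℕ} (a : Fin s) : BasisIdx s → ℝ := Pi.single ((2 : Fin 3), a) 1

/-- Components of the metric of Lemma 2.1: `g(U_a,U_b) = g_{ab}`,
`g(U_a,V_b) = g(V_b,U_a) = δ_{ab}`, `g(T_a,T_b) = -δ_{ab}`, all else zero. -/
def Gmat {s : ℕ} (gm : Fin s → Fin s → ℝ) : BasisIdx s → BasisIdx s → ℝ :=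
  fun x y =>
    if x.1 = 0 ∧ y.1 = 0 then gm x.2 y.2
    else if (x.1 = 0 ∧ y.1 = 1) ∨ (x.1 = 1 ∧ y.1 = 0) then (if x.2 = y.2 then 1 else 0)
    else if x.1 = 2 ∧ y.1 = 2 then (if x.2 = y.2 then (-1 : ℝ) else 0)
    else 0

/-- The bilinear form determined by the metric components. -/
def gBil {s : ℕ} (gm : Fin s → Fin s → ℝ) (X Y : BasisIdx s → ℝ) : ℝ :=
  ∑ p, ∑ q, X p * Gmat gm p q * Y q

/-- The quadrilinear extension of a component tensor to vectors. -/
def ext {s : ℕ} (F : BasisIdx s → BasisIdx s → BasisIdx s → BasisIdx s → ℝ)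
    (x y z w : BasisIdx s → ℝ) : ℝ :=
  ∑ p, ∑ q, ∑ r, ∑ t, x p * y q * z r * w t * F p q r t

/-- A (component-level) algebraic curvature tensor. -/
def IsACT {ι : Type*} (F : ι → ι → ι → ι → ℝ) : Prop :=
  (∀ x y z w, F x y z w = - F y x z w) ∧
  (∀ x y z w, F x y z w = F z w x y) ∧
  (∀ x y z w, F x y z w + F y z x w + F z x y w = 0)

/-- `R²_{abcd} = δ_{ad}δ_{bc} - δ_{ac}δ_{bd}`, constant sectional curvature `+1`. -/
def R2const (s : ℕ) : Fin s → Fin s → Fin s → Fin s → ℝ :=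
  fun a b c d =>
    (if a = d then (1 : ℝ) else 0) * (if b = c then (1 : ℝ) else 0) -
      (if a = c then (1 : ℝ) else 0) * (if b = d then (1 : ℝ) else 0)

/-- The tensor of Lemma 2.1: `R(U_a,U_b,U_c,U_d) = R¹_{abcd}`, components with
exactly one `T` index equal `R²_{abcd}` (replacing the `T` index by the
corresponding `U` index), all else zero. -/
def bigR {s : ℕ} (R1 R2 : Fin s → Fin s → Fin s → Fin s → ℝ) :
    BasisIdx s → BasisIdx s → BasisIdx s → BasisIdx s → ℝ :=
  fun x y z w =>
    if x.1 = 0 ∧ y.1 = 0 ∧ z.1 = 0 ∧ w.1 = 0 then R1 x.2 y.2 z.2 w.2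
    else if (x.1 = 2 ∧ y.1 = 0 ∧ z.1 = 0 ∧ w.1 = 0) ∨ (x.1 = 0 ∧ y.1 = 2 ∧ z.1 = 0 ∧ w.1 = 0) ∨
            (x.1 = 0 ∧ y.1 = 0 ∧ z.1 = 2 ∧ w.1 = 0) ∨ (x.1 = 0 ∧ y.1 = 0 ∧ z.1 = 0 ∧ w.1 = 2)
      then R2 x.2 y.2 z.2 w.2
    else 0


/-! The Jacobi operator of `T_1` vanishes because every nonzero component of `R` has at most one
`T` index, while `R(T_a, U_1 - V_1, U_1 - V_1, U_a) = R²(a,1,1,a) = 1` for `a ≠ 1`. Since the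
metric is nondegenerate, Jacobi operators exist for every `x`; a conjugation carrying `J(T_1) = 0`
to `J(U_1 - V_1)` would force the latter to vanish. -/

theorem LinearMap.BilinForm.exists_compLeft_eq {K V : Type*} [Field K] [AddCommGroup V]
    [Module K V] [FiniteDimensional K V] {B : LinearMap.BilinForm K V} (hB : B.SeparatingLeft)
    (C : LinearMap.BilinForm K V) : ∃ J : V →ₗ[K] V, ∀ y z, B (J y) z = C y z :=
  ⟨(B.toDual (.ofSeparatingLeft hB)).symm.toLinearMap ∘ₗ C, fun y z => by simp⟩

section JacobiOperator

variable {s : ℕ}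

def IsJacobiOperator (gm : Fin s → Fin s → ℝ)
    (F : BasisIdx s → BasisIdx s → BasisIdx s → BasisIdx s → ℝ) (x : BasisIdx s → ℝ)
    (J : Module.End ℝ (BasisIdx s → ℝ)) : Prop :=
  ∀ y z, gBil gm (J y) z = ext F y x x z

theorem toBilin'_Gmat (gm : Fin s → Fin s → ℝ) (X Y : BasisIdx s → ℝ) :
    Matrix.toBilin' (.of (Gmat gm)) X Y = gBil gm X Y :=
  Matrix.toBilin'_apply _ _ _

theorem gBil_single_right (gm : Fin s → Fin s → ℝ) (X : BasisIdx s → ℝ) (q : BasisIdx s) :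
    gBil gm X (Pi.single q 1) = ∑ p, X p * Gmat gm p q := by
  unfold gBil
  rw [Finset.sum_comm]
  simp [Pi.single_apply, mul_ite, Finset.sum_ite_eq']

theorem separatingLeft_toBilin'_Gmat (gm : Fin s → Fin s → ℝ) :
    (Matrix.toBilin' (.of (Gmat gm))).SeparatingLeft := by
  intro X hX
  have hX' : ∀ q, ∑ p, X p * Gmat gm p q = 0 := fun q => by
    rw [← gBil_single_right, ← toBilin'_Gmat, hX]
  have hU : ∀ b, X (0, b) = 0 := fun b => by
    simpa [Fintype.sum_prod_type, Fin.sum_univ_three, Gmat] using hX' (1, b)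
  have hT : ∀ b, X (2, b) = 0 := fun b => by
    simpa [Fintype.sum_prod_type, Fin.sum_univ_three, Gmat] using hX' (2, b)
  have hV : ∀ b, X (1, b) = 0 := fun b => by
    simpa [Fintype.sum_prod_type, Fin.sum_univ_three, Gmat, hU] using hX' (0, b)
  funext ⟨c, b⟩
  fin_cases c
  exacts [hU b, hV b, hT b]

theorem toBilin'_jacobiMatrix (F : BasisIdx s → BasisIdx s → BasisIdx s → BasisIdx s → ℝ)
    (x y z : BasisIdx s → ℝ) :
    Matrix.toBilin' (.of fun p t => ∑ q, ∑ r, x q * x r * F p q r t) y z = ext F y x x z := by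
  rw [Matrix.toBilin'_apply]
  unfold ext
  refine Finset.sum_congr rfl fun p _ => ?_
  simp only [Matrix.of_apply, Finset.mul_sum, Finset.sum_mul]
  rw [Finset.sum_comm]
  refine Finset.sum_congr rfl fun q _ => ?_
  rw [Finset.sum_comm]
  refine Finset.sum_congr rfl fun r _ => Finset.sum_congr rfl fun t _ => ?_
  ring

theorem exists_isJacobiOperator (gm : Fin s → Fin s → ℝ)
    (F : BasisIdx s → BasisIdx s → BasisIdx s → BasisIdx s → ℝ) (x : BasisIdx s → ℝ) :
    ∃ J, IsJacobiOperator gm F x J := by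
  obtain ⟨J, hJ⟩ := LinearMap.BilinForm.exists_compLeft_eq (separatingLeft_toBilin'_Gmat gm)
    (Matrix.toBilin' (.of fun p t => ∑ q, ∑ r, x q * x r * F p q r t))
  exact ⟨J, fun y z => by rw [← toBilin'_Gmat, hJ, toBilin'_jacobiMatrix]⟩

theorem IsJacobiOperator.eq_zero {gm : Fin s → Fin s → ℝ}
    {F : BasisIdx s → BasisIdx s → BasisIdx s → BasisIdx s → ℝ} {x : BasisIdx s → ℝ}
    {J : Module.End ℝ (BasisIdx s → ℝ)} (hJ : IsJacobiOperator gm F x J)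
    (h : ∀ y z, ext F y x x z = 0) : J = 0 :=
  LinearMap.ext fun y => separatingLeft_toBilin'_Gmat gm (J y) fun z => by
    rw [toBilin'_Gmat, hJ, h]

theorem IsJacobiOperator.ne_zero {gm : Fin s → Fin s → ℝ}
    {F : BasisIdx s → BasisIdx s → BasisIdx s → BasisIdx s → ℝ} {x y z : BasisIdx s → ℝ}
    {J : Module.End ℝ (BasisIdx s → ℝ)} (hJ : IsJacobiOperator gm F x J)
    (h : ext F y x x z ≠ 0) : J ≠ 0 := by
  rintro rfl
  refine h ?_
  rw [← hJ, LinearMap.zero_apply, ← toBilin'_Gmat, map_zero, LinearMap.zero_apply]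

theorem isJacobiOperator_zero {gm : Fin s → Fin s → ℝ}
    {F : BasisIdx s → BasisIdx s → BasisIdx s → BasisIdx s → ℝ} {x : BasisIdx s → ℝ}
    (h : ∀ y z, ext F y x x z = 0) : IsJacobiOperator gm F x 0 := fun y z => by
  rw [h, LinearMap.zero_apply, ← toBilin'_Gmat, map_zero, LinearMap.zero_apply]

end JacobiOperator

section Components

variable {s : ℕ}

theorem ext_sub_two (F : BasisIdx s → BasisIdx s → BasisIdx s → BasisIdx s → ℝ)
    (y a b c z : BasisIdx s → ℝ) :
    ext F y (a - b) c z = ext F y a c z - ext F y b c z := by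
  simp only [ext, Pi.sub_apply, sub_mul, mul_sub, ← Finset.sum_sub_distrib]

theorem ext_sub_three (F : BasisIdx s → BasisIdx s → BasisIdx s → BasisIdx s → ℝ)
    (y a b c z : BasisIdx s → ℝ) :
    ext F y c (a - b) z = ext F y c a z - ext F y c b z := by
  simp only [ext, Pi.sub_apply, sub_mul, mul_sub, ← Finset.sum_sub_distrib]

theorem ext_single_single (F : BasisIdx s → BasisIdx s → BasisIdx s → BasisIdx s → ℝ)
    (y z : BasisIdx s → ℝ) (q r : BasisIdx s) :
    ext F y (Pi.single q 1) (Pi.single r 1) z = ∑ p, ∑ t, y p * z t * F p q r t := by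
  simp only [ext, Pi.single_apply, mul_ite, ite_mul, zero_mul, mul_zero, mul_one,
    Finset.sum_ite_irrel, Finset.sum_const_zero, Finset.sum_ite_eq', Finset.mem_univ, if_true]

theorem ext_single (F : BasisIdx s → BasisIdx s → BasisIdx s → BasisIdx s → ℝ)
    (p q r t : BasisIdx s) :
    ext F (Pi.single p 1) (Pi.single q 1) (Pi.single r 1) (Pi.single t 1) = F p q r t := by
  simp [ext_single_single, Pi.single_apply]

variable (R1 R2 : Fin s → Fin s → Fin s → Fin s → ℝ)

theorem ext_bigR_Tvec_Tvec (a b : Fin s) (y z : BasisIdx s → ℝ) :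
    ext (bigR R1 R2) y (Tvec a) (Tvec b) z = 0 := by
  simp [Tvec, ext_single_single, bigR]

theorem ext_bigR_sub_Vvec (a b c d : Fin s) (y z : BasisIdx s → ℝ) :
    ext (bigR R1 R2) y (Uvec a - Vvec b) (Uvec c - Vvec d) z =
      ext (bigR R1 R2) y (Uvec a) (Uvec c) z := by
  simp [ext_sub_two, ext_sub_three, Uvec, Vvec, ext_single_single, bigR]

theorem ext_bigR_Tvec_Uvec (a b c d : Fin s) :
    ext (bigR R1 R2) (Tvec a) (Uvec b) (Uvec c) (Uvec d) = R2 a b c d := by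
  simp [Tvec, Uvec, ext_single, bigR]

theorem R2const_apply_of_ne {a b : Fin s} (h : a ≠ b) : R2const s a b b a = 1 := by
  simp [R2const, h]

theorem gBil_Tvec_Tvec (gm : Fin s → Fin s → ℝ) (a : Fin s) :
    gBil gm (Tvec a) (Tvec a) = -1 := by
  simp [← toBilin'_Gmat, Tvec, Gmat]

theorem gBil_Uvec_sub_Vvec (gm : Fin s → Fin s → ℝ) (a : Fin s) :
    gBil gm (Uvec a - Vvec a) (Uvec a - Vvec a) = gm a a - 2 := by
  simp [← toBilin'_Gmat, Uvec, Vvec, Gmat]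
  ring

end Components

theorem stmt6_general (s : ℕ) (hs : 2 ≤ s) (i1 : Fin s)
    (gm : Fin s → Fin s → ℝ)
    (h11 : gm i1 i1 = 1) :
    gBil gm (Tvec i1) (Tvec i1) = -1 ∧
    gBil gm (Uvec i1 - Vvec i1) (Uvec i1 - Vvec i1) = -1 ∧
    (∀ J : Module.End ℝ (BasisIdx s → ℝ),
       (∀ y z, gBil gm (J y) z =
          ext (bigR (fun _ _ _ _ => 0) (R2const s)) y (Tvec i1) (Tvec i1) z) → J = 0) ∧
    (∀ J : Module.End ℝ (BasisIdx s → ℝ),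
       (∀ y z, gBil gm (J y) z =
          ext (bigR (fun _ _ _ _ => 0) (R2const s)) y (Uvec i1 - Vvec i1)
            (Uvec i1 - Vvec i1) z) → J ≠ 0) ∧
    ¬ (∀ (x x' : BasisIdx s → ℝ) (J J' : Module.End ℝ (BasisIdx s → ℝ)),
        gBil gm x x = -1 → gBil gm x' x' = -1 →
        (∀ y z, gBil gm (J y) z = ext (bigR (fun _ _ _ _ => 0) (R2const s)) y x x z) →
        (∀ y z, gBil gm (J' y) z = ext (bigR (fun _ _ _ _ => 0) (R2const s)) y x' x' z) →
        ∃ P : (BasisIdx s → ℝ) ≃ₗ[ℝ] (BasisIdx s → ℝ),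
          J' = P.toLinearMap ∘ₗ J ∘ₗ P.symm.toLinearMap) := by
  have : Nontrivial (Fin s) := Fin.nontrivial_iff_two_le.mpr hs
  obtain ⟨a, ha⟩ := exists_ne i1
  have hT : gBil gm (Tvec i1) (Tvec i1) = -1 := gBil_Tvec_Tvec gm i1
  have hUV : gBil gm (Uvec i1 - Vvec i1) (Uvec i1 - Vvec i1) = -1 := by
    rw [gBil_Uvec_sub_Vvec, h11]
    norm_num
  have hJT (J) (hJ : IsJacobiOperator gm (bigR (fun _ _ _ _ => 0) (R2const s)) (Tvec i1) J) :
      J = 0 :=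
    hJ.eq_zero (ext_bigR_Tvec_Tvec _ _ i1 i1)
  have hJUV (J) (hJ : IsJacobiOperator gm (bigR (fun _ _ _ _ => 0) (R2const s))
      (Uvec i1 - Vvec i1) J) : J ≠ 0 :=
    hJ.ne_zero (y := Tvec a) (z := Uvec a) <| by
      rw [ext_bigR_sub_Vvec, ext_bigR_Tvec_Uvec, R2const_apply_of_ne ha]
      exact one_ne_zero
  refine ⟨hT, hUV, hJT, hJUV, fun hconj => ?_⟩
  obtain ⟨J, hJ⟩ := exists_isJacobiOperator gm (bigR (fun _ _ _ _ => 0) (R2const s))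
    (Uvec i1 - Vvec i1)
  obtain ⟨P, hP⟩ := hconj _ _ 0 J hT hUV (isJacobiOperator_zero (ext_bigR_Tvec_Tvec _ _ i1 i1)) hJ
  exact hJUV J hJ (by simpa using hP)

/-- with `R¹ = 0`, `R²` the constant curvature `+1` tensor, and
`g_{11} = 1` (so that `U_1 - V_1` is unit timelike, like `T_1`), the Jacobi
operator of `T_1` vanishes while that of `U_1 - V_1` does not; both are unit
timelike, so their Jacobi operators have different Jordan normal forms
(are not conjugate) and `R` is not timelike Jordan Osserman.
Here `i1` denotes the first index (`1` in the paper's numbering). -/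
theorem stmt6 (s : ℕ) (hs : 2 ≤ s) (i1 : Fin s) (hi1 : (i1 : ℕ) = 0)
    (gm : Fin s → Fin s → ℝ)
    (hgm : ∀ a b, gm a b = gm b a) (h11 : gm i1 i1 = 1) :
    gBil gm (Tvec i1) (Tvec i1) = -1 ∧
    gBil gm (Uvec i1 - Vvec i1) (Uvec i1 - Vvec i1) = -1 ∧
    (∀ J : Module.End ℝ (BasisIdx s → ℝ),
       (∀ y z, gBil gm (J y) z =
          ext (bigR (fun _ _ _ _ => 0) (R2const s)) y (Tvec i1) (Tvec i1) z) → J = 0) ∧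
    (∀ J : Module.End ℝ (BasisIdx s → ℝ),
       (∀ y z, gBil gm (J y) z =
          ext (bigR (fun _ _ _ _ => 0) (R2const s)) y (Uvec i1 - Vvec i1)
            (Uvec i1 - Vvec i1) z) → J ≠ 0) ∧
    ¬ (∀ (x x' : BasisIdx s → ℝ) (J J' : Module.End ℝ (BasisIdx s → ℝ)),
        gBil gm x x = -1 → gBil gm x' x' = -1 →
        (∀ y z, gBil gm (J y) z = ext (bigR (fun _ _ _ _ => 0) (R2const s)) y x x z) →
        (∀ y z, gBil gm (J' y) z = ext (bigR (fun _ _ _ _ => 0) (R2const s)) y x' x' z) →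
        ∃ P : (BasisIdx s → ℝ) ≃ₗ[ℝ] (BasisIdx s → ℝ),
          J' = P.toLinearMap ∘ₗ J ∘ₗ P.symm.toLinearMap) :=
  stmt6_general s hs i1 gm h11
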